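/- arXiv:2012.15433 — 2 statements merged into one kernel-verified Lean document; each statement's English description precedes it below -/
import Mathlib

section
/- Let A, B be real 3×2 matrices, each decomposed as A = A_t + A_o and B = B_t + B_o, where the rows of A_t, B_t lie in a fixed 2-dimensional subspace P of R^3 (columns projected onto P) and A_o, B_o are the orthogonal complements. Suppose ‖A_t - B_t‖ ≤ C h^{k+1}, ‖A_o - B_o‖ ≤ C h^k, ‖A_t + B_t‖ ≤ C, and ‖A_o‖ ≤ C h, ‖B_o‖ ≤ C h, for constants C > 0 and 0 < h < 1. Then ‖A^T A - B^T B‖ ≤ C' h^{k+1} for some constant C' depending only on C. -/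
/-!
Columns in `P` are orthogonal to columns in `Pᗮ`, so the cross terms of `AᵀA` vanish and
`AᵀA - BᵀB = (AtᵀAt - BtᵀBt) + (AoᵀAo - BoᵀBo)`. Each bracket is controlled by the polarization
`2 (XᵀX - YᵀY) = (X - Y)ᵀ(X + Y) + (X + Y)ᵀ(X - Y)`: the in-plane one by
`h^{k+1} · C` and the orthogonal one by `h^k · 2Ch`, so the `O(h)` size of the orthogonal parts
supplies the extra power of `h` their difference lacks.
-/

open Matrix

attribute [local instance] Matrix.frobeniusSeminormedAddCommGroup
attribute [local instance] Matrix.frobeniusNormSMulClass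

namespace Matrix

variable {m n p : Type*} [Fintype m]

theorem transpose_mul_eq_zero_of_cols_mem_orthogonal (K : Submodule ℝ (EuclideanSpace ℝ m))
    {X : Matrix m n ℝ} {Y : Matrix m p ℝ}
    (hX : ∀ j, (WithLp.toLp 2 (fun i => X i j) : EuclideanSpace ℝ m) ∈ K)
    (hY : ∀ j, (WithLp.toLp 2 (fun i => Y i j) : EuclideanSpace ℝ m) ∈ Kᗮ) :
    Xᵀ * Y = 0 := by
  ext j l
  have hinner := (Submodule.mem_orthogonal K _).mp (hY l) _ (hX j)
  simpa [mul_apply, PiLp.inner_apply, mul_comm] using hinner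

theorem transpose_mul_self_add_of_cols_mem_orthogonal (K : Submodule ℝ (EuclideanSpace ℝ m))
    {X Y : Matrix m n ℝ}
    (hX : ∀ j, (WithLp.toLp 2 (fun i => X i j) : EuclideanSpace ℝ m) ∈ K)
    (hY : ∀ j, (WithLp.toLp 2 (fun i => Y i j) : EuclideanSpace ℝ m) ∈ Kᗮ) :
    (X + Y)ᵀ * (X + Y) = Xᵀ * X + Yᵀ * Y := by
  have hXY : Xᵀ * Y = 0 := transpose_mul_eq_zero_of_cols_mem_orthogonal K hX hY
  have hYX : Yᵀ * X = 0 := by simpa using congrArg transpose hXY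
  simp [transpose_add, Matrix.add_mul, Matrix.mul_add, hXY, hYX]

theorem two_smul_transpose_mul_self_sub (X Y : Matrix m n ℝ) :
    (2 : ℝ) • (Xᵀ * X - Yᵀ * Y) = (X - Y)ᵀ * (X + Y) + (X + Y)ᵀ * (X - Y) := by
  simp only [transpose_sub, transpose_add, Matrix.add_mul, Matrix.sub_mul, Matrix.mul_add,
    Matrix.mul_sub, two_smul]
  abel

theorem frobenius_norm_transpose_mul_self_sub_le [Fintype n] (X Y : Matrix m n ℝ) :
    ‖Xᵀ * X - Yᵀ * Y‖ ≤ ‖X - Y‖ * ‖X + Y‖ := by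
  have hsum : ‖(2 : ℝ) • (Xᵀ * X - Yᵀ * Y)‖ ≤ 2 * (‖X - Y‖ * ‖X + Y‖) := by
    rw [two_smul_transpose_mul_self_sub, two_mul]
    refine (norm_add_le _ _).trans (add_le_add ?_ ?_)
    · simpa only [frobenius_norm_transpose] using frobenius_norm_mul (X - Y)ᵀ (X + Y)
    · simpa only [frobenius_norm_transpose, mul_comm ‖X - Y‖]
        using frobenius_norm_mul (X + Y)ᵀ (X - Y)
  rw [norm_smul, Real.norm_two] at hsum
  linarith

end Matrix

/-- If the Jacobians `A`, `B` split into in-plane parts (columns in a 2-dimensional subspace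
`P` of `ℝ³`) and orthogonal parts, with in-plane difference `O(h^{k+1})`, orthogonal
difference `O(h^k)`, bounded in-plane sum, and `O(h)` orthogonal parts, then the metric
tensors satisfy `‖AᵀA - BᵀB‖ ≤ C' h^{k+1}` with `C'` depending only on `C`. -/
theorem stmt3 (C : ℝ) (hC : 0 < C) :
    ∃ C' : ℝ, 0 < C' ∧
      ∀ (h : ℝ) (k : ℕ) (A At Ao B Bt Bo : Matrix (Fin 3) (Fin 2) ℝ)
        (P : Submodule ℝ (EuclideanSpace ℝ (Fin 3))),
        0 < h → h < 1 → Module.finrank ℝ P = 2 →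
        A = At + Ao → B = Bt + Bo →
        (∀ j, (WithLp.toLp 2 (fun i => At i j) : EuclideanSpace ℝ (Fin 3)) ∈ P) →
        (∀ j, (WithLp.toLp 2 (fun i => Bt i j) : EuclideanSpace ℝ (Fin 3)) ∈ P) →
        (∀ j, (WithLp.toLp 2 (fun i => Ao i j) : EuclideanSpace ℝ (Fin 3)) ∈ Pᗮ) →
        (∀ j, (WithLp.toLp 2 (fun i => Bo i j) : EuclideanSpace ℝ (Fin 3)) ∈ Pᗮ) →
        ‖At - Bt‖ ≤ C * h ^ (k + 1) →
        ‖Ao - Bo‖ ≤ C * h ^ k →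
        ‖At + Bt‖ ≤ C →
        ‖Ao‖ ≤ C * h → ‖Bo‖ ≤ C * h →
        ‖Aᵀ * A - Bᵀ * B‖ ≤ C' * h ^ (k + 1) := by
  refine ⟨3 * C ^ 2, by positivity, ?_⟩
  rintro h k A At Ao B Bt Bo P hh - - rfl rfl hAt hBt hAo hBo hdt hdo hst hAo_norm hBo_norm
  have split : (At + Ao)ᵀ * (At + Ao) - (Bt + Bo)ᵀ * (Bt + Bo)
      = (Atᵀ * At - Btᵀ * Bt) + (Aoᵀ * Ao - Boᵀ * Bo) := by
    rw [transpose_mul_self_add_of_cols_mem_orthogonal P hAt hAo,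
      transpose_mul_self_add_of_cols_mem_orthogonal P hBt hBo]
    abel
  have hso : ‖Ao + Bo‖ ≤ 2 * C * h := by linarith [norm_add_le Ao Bo]
  have htan : ‖Atᵀ * At - Btᵀ * Bt‖ ≤ C * h ^ (k + 1) * C :=
    (frobenius_norm_transpose_mul_self_sub_le At Bt).trans
      (mul_le_mul hdt hst (norm_nonneg _) (by positivity))
  have horth : ‖Aoᵀ * Ao - Boᵀ * Bo‖ ≤ C * h ^ k * (2 * C * h) :=
    (frobenius_norm_transpose_mul_self_sub_le Ao Bo).trans
      (mul_le_mul hdo hso (norm_nonneg _) (by positivity))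
  calc _ ≤ ‖Atᵀ * At - Btᵀ * Bt‖ + ‖Aoᵀ * Ao - Boᵀ * Bo‖ := split ▸ norm_add_le _ _
    _ ≤ C * h ^ (k + 1) * C + C * h ^ k * (2 * C * h) := add_le_add htan horth
    _ = 3 * C ^ 2 * h ^ (k + 1) := by ring
end

section
/- Let p : D → R be an L-Lipschitz function on a convex domain D ⊂ R^2 and p_h : D → R with Lipschitz gradient constant L' (i.e., ∇p_h is L'-Lipschitz), and suppose L·‖∇p‖_∞ + L'·‖p_h‖_∞ ≤ 1 − c for some c > 0. If x, y ∈ D satisfy x − y = p(y)∇p(y) − p_h(x)∇p_h(x), then |x − y| ≤ (1/c)·(‖∇p‖_∞ · ‖p − p_h‖_∞ + ‖p_h‖_∞ · ‖∇p − ∇p_h‖_∞). -/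
/-!
Writing `p(y)∇p(y) − p_h(x)∇p_h(x) = (p(y) − p_h(x))∇p(y) + p_h(x)(∇p(y) − ∇p_h(x))` and
inserting `p(x)` resp. `∇p_h(y)` into the two differences, the Lipschitz bounds give
`|x − y| ≤ (L‖∇p‖_∞ + L'‖p_h‖_∞)|x − y| + (‖∇p‖_∞‖p − p_h‖_∞ + ‖p_h‖_∞‖∇p − ∇p_h‖_∞)`.
The smallness condition makes the first coefficient at most `1 − c`, so the term can be absorbed.
-/

theorem norm_smul_sub_smul_le {E : Type*} [SeminormedAddCommGroup E] [NormedSpace ℝ E]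
    (s t : ℝ) (u v : E) : ‖s • u - t • v‖ ≤ |s - t| * ‖u‖ + |t| * ‖u - v‖ := by
  have hsplit : s • u - t • v = (s - t) • u + t • (u - v) := by
    rw [sub_smul, smul_sub]; abel
  rw [hsplit, ← Real.norm_eq_abs, ← Real.norm_eq_abs, ← norm_smul, ← norm_smul]
  exact norm_add_le _ _

theorem le_one_div_mul_of_le_mul_add {d q c K : ℝ} (hd : 0 ≤ d) (hc : 0 < c) (hq : q ≤ 1 - c)
    (h : d ≤ q * d + K) : d ≤ 1 / c * K := by
  rw [one_div, inv_mul_eq_div, le_div_iff₀ hc]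
  nlinarith [mul_le_mul_of_nonneg_right hq hd]

theorem stmt9_general (D : Set (EuclideanSpace ℝ (Fin 2)))
    (p ph : EuclideanSpace ℝ (Fin 2) → ℝ) (L L' c : ℝ) (hc : 0 < c)
    (Gp Ph Pdiff Gdiff : ℝ)
    (hLip : ∀ a ∈ D, ∀ b ∈ D, |p a - p b| ≤ L * ‖a - b‖)
    (hLip' : ∀ a ∈ D, ∀ b ∈ D, ‖gradient ph a - gradient ph b‖ ≤ L' * ‖a - b‖)
    (hGp : ∀ z ∈ D, ‖gradient p z‖ ≤ Gp)
    (hPh : ∀ z ∈ D, |ph z| ≤ Ph)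
    (hPdiff : ∀ z ∈ D, |p z - ph z| ≤ Pdiff)
    (hGdiff : ∀ z ∈ D, ‖gradient p z - gradient ph z‖ ≤ Gdiff)
    (hsmall : L * Gp + L' * Ph ≤ 1 - c)
    (x y : EuclideanSpace ℝ (Fin 2)) (hx : x ∈ D) (hy : y ∈ D)
    (heq : x - y = p y • gradient p y - ph x • gradient ph x) :
    ‖x - y‖ ≤ (1 / c) * (Gp * Pdiff + Ph * Gdiff) := by
  set d := ‖x - y‖
  have hval : |p y - ph x| ≤ L * d + Pdiff :=
    (abs_sub_le _ (p x) _).trans <| add_le_add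
      (by simpa only [norm_sub_rev] using hLip y hy x hx) (hPdiff x hx)
  have hgrad : ‖gradient p y - gradient ph x‖ ≤ Gdiff + L' * d :=
    (norm_sub_le_norm_sub_add_norm_sub _ (gradient ph y) _).trans <| add_le_add
      (hGdiff y hy) (by simpa only [norm_sub_rev] using hLip' y hy x hx)
  have hPh0 : 0 ≤ Ph := (abs_nonneg _).trans (hPh x hx)
  refine le_one_div_mul_of_le_mul_add (norm_nonneg _) hc hsmall ?_
  calc d = ‖p y • gradient p y - ph x • gradient ph x‖ := by rw [← heq]
    _ ≤ |p y - ph x| * ‖gradient p y‖ + |ph x| * ‖gradient p y - gradient ph x‖ :=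
      norm_smul_sub_smul_le ..
    _ ≤ (L * d + Pdiff) * Gp + Ph * (Gdiff + L' * d) := by
      gcongr
      exacts [(abs_nonneg _).trans hval, hGp y hy, hPh x hx]
    _ = (L * Gp + L' * Ph) * d + (Gp * Pdiff + Ph * Gdiff) := by ring

/-- The key contraction estimate in the proof of nodal accuracy (Proposition 1): if
`x − y = p(y)∇p(y) − p_h(x)∇p_h(x)` with `p` being `L`-Lipschitz, `∇p_h` being
`L'`-Lipschitz, and `L‖∇p‖_∞ + L'‖p_h‖_∞ ≤ 1 − c`, then
`‖x − y‖ ≤ (1/c)(‖∇p‖_∞‖p − p_h‖_∞ + ‖p_h‖_∞‖∇p − ∇p_h‖_∞)`. -/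
theorem stmt9 (D : Set (EuclideanSpace ℝ (Fin 2))) (hD : Convex ℝ D)
    (p ph : EuclideanSpace ℝ (Fin 2) → ℝ) (L L' c : ℝ) (hc : 0 < c)
    (Gp Ph Pdiff Gdiff : ℝ)
    (hLip : ∀ a ∈ D, ∀ b ∈ D, |p a - p b| ≤ L * ‖a - b‖)
    (hLip' : ∀ a ∈ D, ∀ b ∈ D, ‖gradient ph a - gradient ph b‖ ≤ L' * ‖a - b‖)
    (hGp : ∀ z ∈ D, ‖gradient p z‖ ≤ Gp)
    (hPh : ∀ z ∈ D, |ph z| ≤ Ph)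
    (hPdiff : ∀ z ∈ D, |p z - ph z| ≤ Pdiff)
    (hGdiff : ∀ z ∈ D, ‖gradient p z - gradient ph z‖ ≤ Gdiff)
    (hsmall : L * Gp + L' * Ph ≤ 1 - c)
    (x y : EuclideanSpace ℝ (Fin 2)) (hx : x ∈ D) (hy : y ∈ D)
    (heq : x - y = p y • gradient p y - ph x • gradient ph x) :
    ‖x - y‖ ≤ (1 / c) * (Gp * Pdiff + Ph * Gdiff) :=
  stmt9_general D p ph L L' c hc Gp Ph Pdiff Gdiff hLip hLip' hGp hPh hPdiff hGdiff hsmall x y hx hy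
    heq
end
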